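/- The operator B_p^G defined by v = -Δ_p^G u on the domain L²(V,ν_G) ∩ L^p(V,ν_G) coincides with the subdifferential ∂J_p^G of the convex functional J_p^G(u) = (1/(2p)) ∑_{x,y} |u(y)-u(x)|^p w_{xy} (set to +∞ outside L²(V,ν_G) ∩ L^p(V,ν_G)). -/

import Mathlib

/-!
Summing the tangent-line inequality `|a|^p + p φ(a) (b - a) ≤ |b|^p`, `φ(a) = |a|^(p-2) a`, over
all edges and applying the discrete Green formula (convergent by Young's inequality) shows that
`-Δ_p u` is a subgradient of `J` at `u`. Conversely, let `v` be a subgradient and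
`u_t = u + t δ_z`. The subgradient inequality for `v` at `u` and the one for `-Δ_p u_t` at `u_t`
add up to `t (v(z) d_z + d_z Δ_p u_t(z)) ≤ 0` for every real `t`; since `t ↦ Δ_p u_t(z)` is
continuous (dominated convergence along one row), this forces `v(z) = -Δ_p u(z)`.
-/

open Set

noncomputable def signedRpow (p s : ℝ) : ℝ := |s| ^ (p - 2) * s

lemma signedRpow_neg (p s : ℝ) : signedRpow p (-s) = -signedRpow p s := by
  simp [signedRpow, abs_neg]

lemma continuous_signedRpow {p : ℝ} (hp : 2 ≤ p) : Continuous (signedRpow p) :=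
  (continuous_abs.rpow_const fun _ => Or.inr (by linarith)).mul continuous_id

lemma abs_signedRpow {p : ℝ} (hp : p ≠ 1) (s : ℝ) : |signedRpow p s| = |s| ^ (p - 1) := by
  rw [signedRpow, abs_mul, abs_of_nonneg (by positivity), ← Real.rpow_add_one' (abs_nonneg s)]
  · ring_nf
  · intro h; exact hp (by linarith)

lemma rpow_sub_one_mul_le_rpow_add_rpow {p s t : ℝ} (hp : 1 ≤ p) (hs : 0 ≤ s) (ht : 0 ≤ t) :
    s ^ (p - 1) * t ≤ s ^ p + t ^ p := by
  have hpow : ∀ r : ℝ, 0 ≤ r → r ^ (p - 1) * r = r ^ p := fun r hr => by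
    rw [← Real.rpow_add_one' hr (by linarith), sub_add_cancel]
  rcases le_total t s with h | h
  · calc s ^ (p - 1) * t ≤ s ^ (p - 1) * s := by gcongr
      _ ≤ s ^ p + t ^ p := by rw [hpow s hs]; linarith [Real.rpow_nonneg ht p]
  · calc s ^ (p - 1) * t ≤ t ^ (p - 1) * t := by gcongr
      _ ≤ s ^ p + t ^ p := by rw [hpow t ht]; linarith [Real.rpow_nonneg hs p]

lemma add_rpow_le_two_rpow_mul {p a b : ℝ} (hp : 1 ≤ p) (ha : 0 ≤ a) (hb : 0 ≤ b) :
    (a + b) ^ p ≤ 2 ^ (p - 1) * (a ^ p + b ^ p) := by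
  lift a to NNReal using ha
  lift b to NNReal using hb
  exact_mod_cast NNReal.rpow_add_le_mul_rpow_add_rpow a b hp

lemma abs_sub_rpow_le {p : ℝ} (hp : 1 ≤ p) (a b : ℝ) :
    |a - b| ^ p ≤ 2 ^ (p - 1) * (|a| ^ p + |b| ^ p) :=
  calc |a - b| ^ p ≤ (|a| + |b|) ^ p := by gcongr; exact abs_sub _ _
    _ ≤ 2 ^ (p - 1) * (|a| ^ p + |b| ^ p) :=
      add_rpow_le_two_rpow_mul hp (abs_nonneg a) (abs_nonneg b)

lemma convexOn_abs_rpow {p : ℝ} (hp : 1 ≤ p) : ConvexOn ℝ univ fun x : ℝ => |x| ^ p := by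
  refine ⟨convex_univ, fun x _ y _ a b ha hb hab => ?_⟩
  calc |a • x + b • y| ^ p ≤ (a • |x| + b • |y|) ^ p := by
        gcongr
        simpa [smul_eq_mul, abs_mul, abs_of_nonneg ha, abs_of_nonneg hb] using
          abs_add_le (a * x) (b * y)
    _ ≤ a • |x| ^ p + b • |y| ^ p :=
      (convexOn_rpow hp).2 (abs_nonneg x) (abs_nonneg y) ha hb hab

lemma abs_rpow_add_mul_signedRpow_le {p : ℝ} (hp : 1 < p) (a b : ℝ) :
    |a| ^ p + p * signedRpow p a * (b - a) ≤ |b| ^ p := by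
  have hderiv : HasDerivAt (fun x : ℝ => |x| ^ p) (p * signedRpow p a) a := by
    simpa only [signedRpow, mul_assoc] using hasDerivAt_abs_rpow a hp
  have hconv := convexOn_abs_rpow hp.le
  rcases lt_trichotomy a b with h | rfl | h
  · have := hconv.le_slope_of_hasDerivAt (mem_univ a) (mem_univ b) h hderiv
    rw [slope_def_field, le_div_iff₀ (sub_pos.2 h)] at this
    linarith
  · simp
  · have := hconv.slope_le_of_hasDerivAt (mem_univ b) (mem_univ a) h hderiv
    rw [slope_def_field, div_le_iff₀ (sub_pos.2 h)] at this
    linarith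

lemma eq_zero_of_forall_mul_nonpos {F : ℝ → ℝ} (hF : ContinuousAt F 0) (h : ∀ t, t * F t ≤ 0) :
    F 0 = 0 := by
  apply le_antisymm
  · refine le_of_tendsto (hF.tendsto.mono_left (nhdsWithin_le_nhds (s := Ioi 0))) ?_
    filter_upwards [self_mem_nhdsWithin] with t (ht : 0 < t)
    nlinarith [h t]
  · refine ge_of_tendsto (hF.tendsto.mono_left (nhdsWithin_le_nhds (s := Iio 0))) ?_
    filter_upwards [self_mem_nhdsWithin] with t (ht : t < 0)
    nlinarith [h t]

lemma summable_abs_sub_rpow_mul {V : Type*} {d f g : V → ℝ} {p : ℝ} (hp : 1 ≤ p) (hd : 0 ≤ d)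
    (hf : Summable fun x => |f x| ^ p * d x) (hg : Summable fun x => |g x| ^ p * d x) :
    Summable fun x => |f x - g x| ^ p * d x :=
  Summable.of_nonneg_of_le (fun x => mul_nonneg (by positivity) (hd x))
    (fun x => by
      have := mul_le_mul_of_nonneg_right (abs_sub_rpow_le hp (f x) (g x)) (hd x)
      linarith)
    ((hf.add hg).mul_left (2 ^ (p - 1)))

lemma summable_abs_update_rpow_mul {V : Type*} [DecidableEq V] {d u : V → ℝ} {p : ℝ}
    (hu : Summable fun x => |u x| ^ p * d x) (z : V) (a : ℝ) :
    Summable fun x => |Function.update u z a x| ^ p * d x :=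
  (hu.update z (|a| ^ p * d z)).congr fun x => by
    rcases eq_or_ne x z with rfl | hx <;> simp [*]

structure IsWeightedGraph {V : Type*} (w : V → V → ℝ) (d : V → ℝ) : Prop where
  nonneg : ∀ x y, 0 ≤ w x y
  symm : ∀ x y, w x y = w y x
  summable : ∀ x, Summable (w x)
  degree_eq : ∀ x, d x = ∑' y, w x y

noncomputable def pEnergy {V : Type*} (w : V → V → ℝ) (p : ℝ) (u : V → ℝ) : ℝ :=
  ∑' q : V × V, |u q.2 - u q.1| ^ p * w q.1 q.2

/-- `d x` times the graph `p`-Laplacian `Δ_p u (x)`. -/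
noncomputable def pLaplacianSum {V : Type*} (w : V → V → ℝ) (p : ℝ) (u : V → ℝ) (x : V) : ℝ :=
  ∑' y, signedRpow p (u y - u x) * w x y

namespace IsWeightedGraph

variable {V : Type*} {w : V → V → ℝ} {d : V → ℝ} {p : ℝ}

lemma degree_nonneg (hG : IsWeightedGraph w d) : 0 ≤ d := fun x => by
  rw [hG.degree_eq x]; exact tsum_nonneg (hG.nonneg x)

lemma summable_mul_weight_fst (hG : IsWeightedGraph w d) {f : V → ℝ} (hf : 0 ≤ f)
    (hfd : Summable fun x => f x * d x) : Summable fun q : V × V => f q.1 * w q.1 q.2 := by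
  rw [summable_prod_of_nonneg fun q => mul_nonneg (hf _) (hG.nonneg _ _)]
  refine ⟨fun x => (hG.summable x).mul_left (f x), hfd.congr fun x => ?_⟩
  rw [hG.degree_eq, ← tsum_mul_left]

lemma summable_mul_weight_snd (hG : IsWeightedGraph w d) {f : V → ℝ} (hf : 0 ≤ f)
    (hfd : Summable fun x => f x * d x) : Summable fun q : V × V => f q.2 * w q.1 q.2 := by
  rw [← (Equiv.prodComm V V).summable_iff]
  refine (hG.summable_mul_weight_fst hf hfd).congr fun q => ?_
  simp [hG.symm q.1 q.2]

lemma summable_energy (hG : IsWeightedGraph w d) (hp : 1 ≤ p) {u : V → ℝ}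
    (hu : Summable fun x => |u x| ^ p * d x) :
    Summable fun q : V × V => |u q.2 - u q.1| ^ p * w q.1 q.2 := by
  have hpow : 0 ≤ fun x => |u x| ^ p := fun x => by positivity
  refine Summable.of_nonneg_of_le (fun q => mul_nonneg (by positivity) (hG.nonneg _ _))
    (fun q => ?_)
    (((hG.summable_mul_weight_snd hpow hu).add (hG.summable_mul_weight_fst hpow hu)).mul_left
      (2 ^ (p - 1)))
  have := mul_le_mul_of_nonneg_right (abs_sub_rpow_le hp (u q.2) (u q.1)) (hG.nonneg q.1 q.2)
  linarith

lemma summable_signedRpow_mul_fst (hG : IsWeightedGraph w d) (hp : 1 < p) {u g : V → ℝ}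
    (hu : Summable fun x => |u x| ^ p * d x) (hg : Summable fun x => |g x| ^ p * d x) :
    Summable fun q : V × V => signedRpow p (u q.2 - u q.1) * g q.1 * w q.1 q.2 := by
  refine Summable.of_norm_bounded ((hG.summable_energy hp.le hu).add
    (hG.summable_mul_weight_fst (fun x => by positivity) hg)) fun q => ?_
  rw [Real.norm_eq_abs, abs_mul, abs_mul, abs_signedRpow hp.ne', abs_of_nonneg (hG.nonneg _ _),
    ← add_mul]
  exact mul_le_mul_of_nonneg_right
    (rpow_sub_one_mul_le_rpow_add_rpow hp.le (abs_nonneg _) (abs_nonneg _)) (hG.nonneg _ _)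

/-- Discrete Green formula. -/
lemma hasSum_signedRpow_mul_sub (hG : IsWeightedGraph w d) (hp : 1 < p) {u g : V → ℝ}
    (hu : Summable fun x => |u x| ^ p * d x) (hg : Summable fun x => |g x| ^ p * d x) :
    HasSum (fun q : V × V => signedRpow p (u q.2 - u q.1) * (g q.2 - g q.1) * w q.1 q.2)
      (-2 * ∑' x, g x * pLaplacianSum w p u x) := by
  set A : V × V → ℝ := fun q => signedRpow p (u q.2 - u q.1) * g q.1 * w q.1 q.2
  set B : V × V → ℝ := fun q => signedRpow p (u q.2 - u q.1) * g q.2 * w q.1 q.2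
  have hA : Summable A := hG.summable_signedRpow_mul_fst hp hu hg
  have hswap : ∀ q, B (Equiv.prodComm V V q) = -A q := fun q => by
    simp only [A, B, Equiv.prodComm_apply, Prod.fst_swap, Prod.snd_swap]
    rw [hG.symm, ← neg_sub (u q.2), signedRpow_neg]
    ring
  have hB : Summable B := by
    rw [← (Equiv.prodComm V V).summable_iff]
    exact hA.neg.congr fun q => (hswap q).symm
  have hBA : ∑' q, B q = -∑' q, A q := by
    rw [← (Equiv.prodComm V V).tsum_eq, ← tsum_neg]
    exact tsum_congr hswap
  have hA_rows : ∑' q, A q = ∑' x, g x * pLaplacianSum w p u x := by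
    rw [hA.tsum_prod]
    refine tsum_congr fun x => ?_
    rw [pLaplacianSum, ← tsum_mul_left]
    exact tsum_congr fun y => by ring
  have h := hB.hasSum.sub hA.hasSum
  rw [hBA, hA_rows, neg_sub_left, ← two_mul, ← neg_mul] at h
  exact h.congr_fun fun q => by simp only [A, B]; ring

lemma pEnergy_sub_le (hG : IsWeightedGraph w d) (hp : 1 < p) {u v : V → ℝ}
    (hu : Summable fun x => |u x| ^ p * d x) (hv : Summable fun x => |v x| ^ p * d x) :
    pEnergy w p u - 2 * p * ∑' x, (v x - u x) * pLaplacianSum w p u x ≤ pEnergy w p v := by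
  have hvu := summable_abs_sub_rpow_mul hp.le hG.degree_nonneg hv hu
  have hsum := (hG.summable_energy hp.le hu).hasSum.add
    ((hG.hasSum_signedRpow_mul_sub hp hu hvu).mul_left p)
  have hedge : ∀ q : V × V, |u q.2 - u q.1| ^ p * w q.1 q.2 +
      p * (signedRpow p (u q.2 - u q.1) * ((v q.2 - u q.2) - (v q.1 - u q.1)) * w q.1 q.2) ≤
        |v q.2 - v q.1| ^ p * w q.1 q.2 := fun q => by
    have := mul_le_mul_of_nonneg_right
      (abs_rpow_add_mul_signedRpow_le hp (u q.2 - u q.1) (v q.2 - v q.1)) (hG.nonneg q.1 q.2)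
    linarith
  have := hasSum_le hedge hsum (hG.summable_energy hp.le hv).hasSum
  rw [pEnergy, pEnergy]
  linarith

lemma continuousAt_pLaplacianSum_update [DecidableEq V] (hG : IsWeightedGraph w d)
    (hp : 2 ≤ p) {u : V → ℝ} {z : V} (hu : Summable fun y => |u y - u z| ^ p * w z y) :
    ContinuousAt (fun t => pLaplacianSum w p (Function.update u z (u z + t)) z) 0 := by
  have hdiff : ∀ y t, |Function.update u z (u z + t) y - Function.update u z (u z + t) z|
      ≤ |u y - u z| + |t| := fun y t => by
    rcases eq_or_ne y z with rfl | hy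
    · simp
    · rw [Function.update_of_ne hy, Function.update_self, ← sub_sub]
      exact abs_sub _ _
  have hterm : ∀ y, Continuous fun t =>
      signedRpow p (Function.update u z (u z + t) y - Function.update u z (u z + t) z) * w z y := by
    intro y
    refine ((continuous_signedRpow hp).comp ?_).mul continuous_const
    rcases eq_or_ne y z with rfl | hy
    · simp only [sub_self]; exact continuous_const
    · simp only [Function.update_of_ne hy, Function.update_self]; fun_prop
  have hbound : ∀ y, ∀ t ∈ Icc (-1 : ℝ) 1,
      ‖signedRpow p (Function.update u z (u z + t) y - Function.update u z (u z + t) z) * w z y‖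
        ≤ 2 ^ (p - 1) * (|u y - u z| ^ p * w z y + w z y) := by
    intro y t ht
    have ht1 : |t| ≤ 1 := abs_le.2 ht
    rw [Real.norm_eq_abs, abs_mul, abs_signedRpow (by linarith), abs_of_nonneg (hG.nonneg z y)]
    have hs := calc
      |Function.update u z (u z + t) y - Function.update u z (u z + t) z| ^ (p - 1)
          ≤ (|u y - u z| + 1) ^ (p - 1) := by
        gcongr
        · linarith
        · exact (hdiff y t).trans (by linarith)
      _ ≤ (|u y - u z| + 1) ^ p :=
          Real.rpow_le_rpow_of_exponent_le (by linarith [abs_nonneg (u y - u z)]) (by linarith)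
      _ ≤ 2 ^ (p - 1) * (|u y - u z| ^ p + 1 ^ p) :=
          add_rpow_le_two_rpow_mul (by linarith) (abs_nonneg _) zero_le_one
    have := mul_le_mul_of_nonneg_right hs (hG.nonneg z y)
    rw [Real.one_rpow] at this
    linarith
  exact (continuousOn_tsum (fun y => (hterm y).continuousOn)
    ((hu.add (hG.summable z)).mul_left _) hbound).continuousAt
    (Icc_mem_nhds (by norm_num) (by norm_num))

lemma eq_neg_pLaplacianSum_of_subgradient (hG : IsWeightedGraph w d) (hp : 2 ≤ p)
    {u v : V → ℝ} (hu2 : Summable fun x => |u x| ^ (2 : ℝ) * d x)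
    (hup : Summable fun x => |u x| ^ p * d x)
    (hv : ∀ ww : V → ℝ, (Summable fun x => |ww x| ^ (2 : ℝ) * d x) →
      (Summable fun x => |ww x| ^ p * d x) →
        2 * p * ∑' x, v x * (ww x - u x) * d x ≤ pEnergy w p ww - pEnergy w p u)
    (z : V) : v z * d z = -pLaplacianSum w p u z := by
  classical
  set ut : ℝ → V → ℝ := fun t => Function.update u z (u z + t)
  have hutp : ∀ t, Summable fun x => |ut t x| ^ p * d x := fun t =>
    summable_abs_update_rpow_mul hup z _
  have hmul : ∀ t, t * (v z * d z + pLaplacianSum w p (ut t) z) ≤ 0 := by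
    intro t
    have hsub := hv (ut t) (summable_abs_update_rpow_mul hu2 z _) (hutp t)
    have hsuper := hG.pEnergy_sub_le (by linarith) (hutp t) hup
    rw [tsum_eq_single z fun x hx => by simp [ut, hx]] at hsub hsuper
    simp only [ut, Function.update_self, add_sub_cancel_left, sub_add_cancel_left] at hsub hsuper
    nlinarith
  have hcont : ContinuousAt (fun t => v z * d z + pLaplacianSum w p (ut t) z) 0 :=
    continuousAt_const.add (hG.continuousAt_pLaplacianSum_update hp
      ((hG.summable_energy (by linarith) hup).prod_factor z))
  have := eq_zero_of_forall_mul_nonpos hcont hmul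
  simp only [ut, add_zero, Function.update_eq_self] at this
  linarith

end IsWeightedGraph

theorem stmt3_general {V : Type*} (w : V → V → ℝ) (d : V → ℝ)
    (hw : ∀ x y, 0 ≤ w x y) (hsymm : ∀ x y, w x y = w y x)
    (hd : ∀ x, d x = ∑' y, w x y) (hdpos : ∀ x, 0 < d x)
    (p : ℝ) (hp : 3 ≤ p)
    (J : (V → ℝ) → ℝ)
    (hJ : ∀ u : V → ℝ, J u = (1 / (2 * p)) * ∑' q : V × V, |u q.2 - u q.1| ^ p * w q.1 q.2)
    (u v : V → ℝ)
    (hu2 : Summable fun x => |u x| ^ (2 : ℝ) * d x) :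
    ((Summable fun x => |u x| ^ p * d x) ∧
        ∀ x, v x = -((1 / d x) * ∑' y, |u y - u x| ^ (p - 2) * (u y - u x) * w x y)) ↔
      ((Summable fun x => |u x| ^ p * d x) ∧
        ∀ ww : V → ℝ, (Summable fun x => |ww x| ^ (2 : ℝ) * d x) →
          (Summable fun x => |ww x| ^ p * d x) →
            J ww - J u ≥ ∑' x, v x * (ww x - u x) * d x) := by
  have hG : IsWeightedGraph w d := ⟨hw, hsymm, fun x => by
    by_contra h
    exact (hdpos x).ne' (by rw [hd, tsum_eq_zero_of_not_summable h]), hd⟩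
  have hv_iff : ∀ x, v x = -((1 / d x) * ∑' y, |u y - u x| ^ (p - 2) * (u y - u x) * w x y) ↔
      v x * d x = -pLaplacianSum w p u x := fun x => by
    rw [← eq_div_iff (hdpos x).ne']
    exact Eq.congr_right (by simp only [pLaplacianSum, signedRpow]; ring)
  have hJ_iff : ∀ ww, J ww - J u ≥ ∑' x, v x * (ww x - u x) * d x ↔
      2 * p * ∑' x, v x * (ww x - u x) * d x ≤ pEnergy w p ww - pEnergy w p u := fun ww => by
    rw [hJ, hJ, ← mul_sub, ge_iff_le, one_div, ← div_eq_inv_mul, le_div_iff₀ (by linarith),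
      mul_comm]
    rfl
  simp only [hv_iff, hJ_iff]
  refine and_congr_right fun hup => ⟨fun hv ww _ hwwp => ?_, fun hv z => ?_⟩
  · have hpair : ∑' x, v x * (ww x - u x) * d x =
        -∑' x, (ww x - u x) * pLaplacianSum w p u x := by
      rw [← tsum_neg]
      exact tsum_congr fun x => by rw [mul_right_comm, hv x]; ring
    rw [hpair]
    linarith [hG.pEnergy_sub_le (by linarith) hup hwwp]
  · exact hG.eq_neg_pLaplacianSum_of_subgradient (by linarith) hu2 hup hv z

/-- The operator B_p^G (i.e. v = -Δ_p^G u on L² ∩ L^p) coincides with the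
subdifferential of J_p^G in L²(V,ν_G). -/
theorem stmt3 {V : Type*} [Countable V] (w : V → V → ℝ) (d : V → ℝ)
    (hw : ∀ x y, 0 ≤ w x y) (hsymm : ∀ x y, w x y = w y x)
    (hd : ∀ x, d x = ∑' y, w x y) (hdpos : ∀ x, 0 < d x)
    (p : ℝ) (hp : 3 ≤ p)
    (J : (V → ℝ) → ℝ)
    (hJ : ∀ u : V → ℝ, J u = (1 / (2 * p)) * ∑' q : V × V, |u q.2 - u q.1| ^ p * w q.1 q.2)
    (u v : V → ℝ)
    (hu2 : Summable fun x => |u x| ^ (2 : ℝ) * d x)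
    (hv2 : Summable fun x => |v x| ^ (2 : ℝ) * d x) :
    ((Summable fun x => |u x| ^ p * d x) ∧
        ∀ x, v x = -((1 / d x) * ∑' y, |u y - u x| ^ (p - 2) * (u y - u x) * w x y)) ↔
      ((Summable fun x => |u x| ^ p * d x) ∧
        ∀ ww : V → ℝ, (Summable fun x => |ww x| ^ (2 : ℝ) * d x) →
          (Summable fun x => |ww x| ^ p * d x) →
            J ww - J u ≥ ∑' x, v x * (ww x - u x) * d x) :=
  stmt3_general w d hw hsymm hd hdpos p hp J hJ u v hu2
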